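/- Let W be a minimum zero blocking set of the grid graph G_{m,n} (with n ≥ m ≥ 2), and note that the bottom row contains at least one vertex of W. For each integer x with 1 ≤ x ≤ n, let d(x) = min{ |x − a| : (a,1) ∈ W }. Then every vertex (x,y) of G_{m,n} with y < d(x) + 1 is black, i.e., (x,y) ∉ W. -/

import Mathlib

/-- A set `S` is closed under the zero forcing rule: whenever a (black) vertex
`v ∈ S` has exactly one neighbor outside `S`, that neighbor lies in `S`. -/
def ZFClosed {V : Type*} (G : SimpleGraph V) (S : Set V) : Prop :=
  ∀ v ∈ S, ∀ w : V, G.neighborSet v \ S = {w} → w ∈ S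

/-- The final black set of the zero forcing process started from `B`:
the smallest superset of `B` closed under the zero forcing rule. -/
def zfClosure {V : Type*} (G : SimpleGraph V) (B : Set V) : Set V :=
  ⋂₀ {S : Set V | B ⊆ S ∧ ZFClosed G S}

/-- `B` is a zero forcing set if the process colors every vertex black. -/
def IsZeroForcingSet {V : Type*} (G : SimpleGraph V) (B : Set V) : Prop :=
  zfClosure G B = Set.univ

/-- `W` is a zero blocking set if its complement is not a zero forcing set. -/
def IsZeroBlockingSet {V : Type*} (G : SimpleGraph V) (W : Set V) : Prop :=
  ¬ IsZeroForcingSet G Wᶜ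

/-- The zero blocking number: minimum size of a zero blocking set. -/
noncomputable def zeroBlockingNumber {V : Type*} (G : SimpleGraph V) : ℕ :=
  sInf {k : ℕ | ∃ W : Set V, IsZeroBlockingSet G W ∧ W.ncard = k}

/-- A minimum zero blocking set. -/
def IsMinZeroBlockingSet {V : Type*} (G : SimpleGraph V) (W : Set V) : Prop :=
  IsZeroBlockingSet G W ∧ W.ncard = zeroBlockingNumber G

/-- Vertices of the grid graph `G_{m,n}`: lattice points `(x,y)` with
`1 ≤ x ≤ n` and `1 ≤ y ≤ m`. -/
abbrev GridVert (m n : ℤ) : Type :=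
  {p : ℤ × ℤ // 1 ≤ p.1 ∧ p.1 ≤ n ∧ 1 ≤ p.2 ∧ p.2 ≤ m}

/-- The grid graph `G_{m,n} = P_m □ P_n`. -/
def gridGraph (m n : ℤ) : SimpleGraph (GridVert m n) where
  Adj p q := |p.val.1 - q.val.1| + |p.val.2 - q.val.2| = 1
  symm := by
    constructor
    intro p q h
    rw [abs_sub_comm, abs_sub_comm p.val.2] at h
    exact h
  loopless := by
    constructor
    intro p h
    simp at h

section Aux

lemma subset_zfClosure {V : Type*} (G : SimpleGraph V) (B : Set V) :
    B ⊆ zfClosure G B := fun _ hx => Set.mem_sInter.mpr fun _ hS => hS.1 hx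

lemma zfClosure_subset {V : Type*} (G : SimpleGraph V) {B S : Set V}
    (h1 : B ⊆ S) (h2 : ZFClosed G S) : zfClosure G B ⊆ S :=
  Set.sInter_subset_of_mem ⟨h1, h2⟩

lemma zfClosed_zfClosure {V : Type*} (G : SimpleGraph V) (B : Set V) :
    ZFClosed G (zfClosure G B) := by
  intro v hv w hw
  rw [zfClosure, Set.mem_sInter]
  rintro S hS
  have hvS : v ∈ S := Set.mem_sInter.mp hv S hS
  have hwN : w ∈ G.neighborSet v := by
    have hww : w ∈ G.neighborSet v \ zfClosure G B := by rw [hw]; rfl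
    exact hww.1
  by_cases hwS : w ∈ S
  · exact hwS
  · refine hS.2 v hvS w ?_
    apply Set.Subset.antisymm
    · intro x hx
      have hx2 : x ∈ G.neighborSet v \ zfClosure G B :=
        ⟨hx.1, fun hc => hx.2 (Set.mem_sInter.mp hc S hS)⟩
      rw [hw] at hx2; exact hx2
    · intro x hx
      rw [Set.mem_singleton_iff] at hx; subst hx
      exact ⟨hwN, hwS⟩

/-- A minimum zero blocking set is a *fort*: no vertex outside it has exactly
one neighbor in it. -/
lemma fort_of_min {V : Type*} [Finite V] (G : SimpleGraph V) (W : Set V)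
    (hW : IsMinZeroBlockingSet G W) (v : V) (hv : v ∉ W) (w : V) :
    G.neighborSet v ∩ W ≠ {w} := by
  set F := (zfClosure G Wᶜ)ᶜ with hF
  have hblock : zfClosure G Wᶜ ≠ Set.univ := hW.1
  have hFW : F ⊆ W := by
    intro x hx
    by_contra hxW
    exact hx (subset_zfClosure G Wᶜ hxW)
  have hFc : Fᶜ = zfClosure G Wᶜ := compl_compl _
  have hFblock : IsZeroBlockingSet G F := by
    intro h
    have hsub : zfClosure G Fᶜ ⊆ Fᶜ :=
      zfClosure_subset G (le_refl _) (hFc ▸ zfClosed_zfClosure G Wᶜ)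
    rw [h] at hsub
    have hFu : Fᶜ = Set.univ := Set.eq_univ_of_univ_subset hsub
    rw [hFc] at hFu
    exact hblock hFu
  have hle : zeroBlockingNumber G ≤ F.ncard := Nat.sInf_le ⟨F, hFblock, rfl⟩
  have hge : W.ncard ≤ F.ncard := hW.2 ▸ hle
  have hFeq : F = W := Set.eq_of_subset_of_ncard_le hFW hge (Set.toFinite W)
  have hWc : Wᶜ = zfClosure G Wᶜ := by rw [← hFc, hFeq]
  have hclosed := zfClosed_zfClosure G Wᶜ
  rw [← hWc] at hclosed
  intro hNw
  have hdiff : G.neighborSet v \ Wᶜ = {w} := by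
    rw [Set.diff_compl]; exact hNw
  have hwW : w ∈ W := by
    have hww : w ∈ G.neighborSet v ∩ W := by rw [hNw]; rfl
    exact hww.2
  exact (hclosed v hv w hdiff) hwW

instance gridFinite (m n : ℤ) : Finite (GridVert m n) := by
  have h : Set.Finite {p : ℤ × ℤ | 1 ≤ p.1 ∧ p.1 ≤ n ∧ 1 ≤ p.2 ∧ p.2 ≤ m} := by
    apply Set.Finite.subset (Set.finite_Icc ((1 : ℤ), (1 : ℤ)) (n, m))
    rintro ⟨x, y⟩ ⟨h1, h2, h3, h4⟩
    exact ⟨⟨h1, h3⟩, ⟨h2, h4⟩⟩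
  exact h.to_subtype

lemma abs_add_abs_eq_one {a b : ℤ} (h : |a| + |b| = 1) :
    (a = 1 ∧ b = 0) ∨ (a = -1 ∧ b = 0) ∨ (a = 0 ∧ b = 1) ∨ (a = 0 ∧ b = -1) := by
  rcases abs_cases a with ⟨h1, h1'⟩ | ⟨h1, h1'⟩ <;>
    rcases abs_cases b with ⟨h2, h2'⟩ | ⟨h2, h2'⟩ <;> omega

lemma grid_adj_up (m n : ℤ) (p q : GridVert m n)
    (h1 : p.val.1 = q.val.1) (h2 : p.val.2 = q.val.2 - 1) :
    (gridGraph m n).Adj p q := by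
  show |p.val.1 - q.val.1| + |p.val.2 - q.val.2| = 1
  rw [h1, h2, sub_self, abs_zero, show q.val.2 - 1 - q.val.2 = -1 from by ring]
  norm_num

end Aux

/-- **Proposition 4, first part.** For a minimum zero blocking set `W` of `G_{m,n}`,
the bottom row meets `W`, and with `d x` the distance from `x` to the nearest white
bottom-row vertex, every vertex `(x, y)` with `y < d x + 1` is black. -/
theorem vertices_strictly_below_SXY_black (m n : ℤ) (hm : 2 ≤ m) (hmn : m ≤ n)
    (W : Set (GridVert m n)) (hW : IsMinZeroBlockingSet (gridGraph m n) W)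
    (d : ℤ → ℤ)
    (hd : ∀ x : ℤ, d x = sInf {k : ℤ | ∃ a : ℤ, (∃ A ∈ W, A.val = (a, 1)) ∧ k = |x - a|}) :
    (∃ A ∈ W, A.val.2 = 1) ∧
    ∀ A : GridVert m n, A.val.2 < d A.val.1 + 1 → A ∉ W := by
  have fort := fort_of_min (gridGraph m n) W hW
  -- W is nonempty
  have hWne : W.Nonempty := by
    rcases Set.eq_empty_or_nonempty W with h | h
    · exfalso
      apply hW.1
      rw [h, Set.compl_empty]
      exact Set.eq_univ_of_univ_subset (subset_zfClosure (gridGraph m n) Set.univ)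
    · exact h
  -- Part 1: the bottom row meets W
  have part1 : ∃ A ∈ W, A.val.2 = 1 := by
    obtain ⟨A, hAW, hAmin⟩ :=
      Set.exists_min_image W (fun C => C.val.2) (Set.toFinite W) hWne
    refine ⟨A, hAW, ?_⟩
    by_contra h1
    have hA2 : 2 ≤ A.val.2 := by
      have := A.prop.2.2.1
      omega
    have hpmem : 1 ≤ (A.val.1 : ℤ) ∧ A.val.1 ≤ n ∧ 1 ≤ A.val.2 - 1 ∧ A.val.2 - 1 ≤ m := by
      obtain ⟨q1, q2, q3, q4⟩ := A.prop
      refine ⟨q1, q2, by omega, by omega⟩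
    set p : GridVert m n := ⟨(A.val.1, A.val.2 - 1), hpmem⟩ with hp
    have hpW : p ∉ W := by
      intro hpw
      have := hAmin p hpw
      simp only [hp] at this
      omega
    apply fort p hpW A
    ext q
    simp only [Set.mem_inter_iff, SimpleGraph.mem_neighborSet, Set.mem_singleton_iff]
    constructor
    · rintro ⟨hadj, hqW⟩
      have hadj' : |A.val.1 - q.val.1| + |(A.val.2 - 1) - q.val.2| = 1 := hadj
      have hq2 : A.val.2 ≤ q.val.2 := hAmin q hqW
      rcases abs_add_abs_eq_one hadj' with ⟨e1, e2⟩ | ⟨e1, e2⟩ | ⟨e1, e2⟩ | ⟨e1, e2⟩ <;>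
        first
        | omega
        | (apply Subtype.ext; apply Prod.ext <;> omega)
    · rintro rfl
      exact ⟨grid_adj_up m n p _ rfl rfl, hAW⟩
  refine ⟨part1, ?_⟩
  -- Facts about d
  obtain ⟨A0, hA0W, hA01⟩ := part1
  have hbot : ∃ A ∈ W, A.val = (A0.val.1, 1) := by
    refine ⟨A0, hA0W, ?_⟩
    apply Prod.ext
    · rfl
    · exact hA01
  have hbdd : ∀ x : ℤ, BddBelow {k : ℤ | ∃ a : ℤ, (∃ A ∈ W, A.val = (a, 1)) ∧ k = |x - a|} := by
    intro x
    refine ⟨0, ?_⟩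
    rintro k ⟨a, _, rfl⟩
    exact abs_nonneg _
  have hne : ∀ x : ℤ, ({k : ℤ | ∃ a : ℤ, (∃ A ∈ W, A.val = (a, 1)) ∧ k = |x - a|}).Nonempty :=
    fun x => ⟨|x - A0.val.1|, A0.val.1, hbot, rfl⟩
  have d_le : ∀ x a : ℤ, (∃ A ∈ W, A.val = (a, 1)) → d x ≤ |x - a| := by
    intro x a ha
    rw [hd x]
    exact csInf_le (hbdd x) ⟨a, ha, rfl⟩
  have d_mem : ∀ x : ℤ, ∃ a : ℤ, (∃ A ∈ W, A.val = (a, 1)) ∧ d x = |x - a| := by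
    intro x
    rw [hd x]
    exact Int.csInf_mem (hne x) (hbdd x)
  have dLip : ∀ x y : ℤ, d x ≤ d y + |x - y| := by
    intro x y
    obtain ⟨a, ha, hda⟩ := d_mem y
    have h1 : d x ≤ |x - a| := d_le x a ha
    have h2 : |x - a| ≤ |x - y| + |y - a| := abs_sub_le x y a
    omega
  -- Part 2
  rintro A hAlt hAW
  set Vio : Set (GridVert m n) := {B | B ∈ W ∧ B.val.2 ≤ d B.val.1} with hVio
  have hAV : A ∈ Vio := ⟨hAW, by omega⟩
  obtain ⟨B, hBV, hBmin⟩ :=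
    Set.exists_min_image Vio (fun C => C.val.2) (Set.toFinite Vio) ⟨A, hAV⟩
  obtain ⟨hBW, hBd⟩ := hBV
  have hB2 : 2 ≤ B.val.2 := by
    by_contra h
    have hBe : B.val.2 = 1 := by
      have := B.prop.2.2.1
      omega
    have hmem : ∃ C ∈ W, C.val = (B.val.1, 1) := by
      refine ⟨B, hBW, ?_⟩
      apply Prod.ext
      · rfl
      · exact hBe
    have hle0 := d_le B.val.1 B.val.1 hmem
    rw [sub_self, abs_zero] at hle0
    omega
  have hpmem : 1 ≤ (B.val.1 : ℤ) ∧ B.val.1 ≤ n ∧ 1 ≤ B.val.2 - 1 ∧ B.val.2 - 1 ≤ m := by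
    obtain ⟨q1, q2, q3, q4⟩ := B.prop
    refine ⟨q1, q2, by omega, by omega⟩
  set p : GridVert m n := ⟨(B.val.1, B.val.2 - 1), hpmem⟩ with hp
  have hpW : p ∉ W := by
    intro hpw
    have hpV : p ∈ Vio := ⟨hpw, by simp only [hp]; omega⟩
    have := hBmin p hpV
    simp only [hp] at this
    omega
  apply fort p hpW B
  ext q
  simp only [Set.mem_inter_iff, SimpleGraph.mem_neighborSet, Set.mem_singleton_iff]
  constructor
  · rintro ⟨hadj, hqW⟩
    have hadj' : |B.val.1 - q.val.1| + |(B.val.2 - 1) - q.val.2| = 1 := hadj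
    rcases abs_add_abs_eq_one hadj' with ⟨e1, e2⟩ | ⟨e1, e2⟩ | ⟨e1, e2⟩ | ⟨e1, e2⟩
    · -- q = (B.1 - 1, B.2 - 1)
      exfalso
      have hq1 : q.val.1 = B.val.1 - 1 := by omega
      have hq2 : q.val.2 = B.val.2 - 1 := by omega
      have hL := dLip B.val.1 q.val.1
      have habs : |B.val.1 - q.val.1| = 1 := by rw [e1]; norm_num
      have hqV : q ∈ Vio := ⟨hqW, by omega⟩
      have := hBmin q hqV
      omega
    · -- q = (B.1 + 1, B.2 - 1)
      exfalso
      have hq1 : q.val.1 = B.val.1 + 1 := by omega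
      have hq2 : q.val.2 = B.val.2 - 1 := by omega
      have hL := dLip B.val.1 q.val.1
      have habs : |B.val.1 - q.val.1| = 1 := by
        rw [show B.val.1 - q.val.1 = -1 by omega]; norm_num
      have hqV : q ∈ Vio := ⟨hqW, by omega⟩
      have := hBmin q hqV
      omega
    · -- q = (B.1, B.2 - 2)
      exfalso
      have hq1 : q.val.1 = B.val.1 := by omega
      have hq2 : q.val.2 = B.val.2 - 2 := by omega
      have hqV : q ∈ Vio := ⟨hqW, by rw [hq1]; omega⟩
      have := hBmin q hqV
      omega
    · -- q = B
      apply Subtype.ext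
      apply Prod.ext <;> omega
  · rintro rfl
    exact ⟨grid_adj_up m n p _ rfl rfl, hBW⟩
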